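/- Suppose the primal and dual condition numbers δ_P and δ_D of the LP are both positive, let (x*, u*) be a primal–dual optimal pair with C_* := max(‖x* − x̄‖, ‖u* − ū‖), and suppose β ≥ 10 C_* / (‖d‖ min(δ_P, δ_D)). Then, with b_β := A x(β) and c_β := c + (1/β)(x(β) − x̄), the optimal value of the perturbed LP min c_β^T x subject to Ax = b_β, x ≥ 0 (which is attained at x(β)) satisfies |c^T x* − c_β^T x(β)| ≤ (1/β) · 25 C_* / (2 δ_P δ_D). -/

import Mathlib

open Matrix Finset MeasureTheory ProbabilityTheory

/-- Euclidean norm of a finitely-indexed real vector. -/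
noncomputable def l2norm {ι : Type*} [Fintype ι] (x : ι → ℝ) : ℝ :=
  Real.sqrt (∑ i, (x i) ^ 2)

/-- Frobenius norm of a real matrix. -/
noncomputable def frobNorm {ι κ : Type*} [Fintype ι] [Fintype κ] (A : Matrix ι κ ℝ) : ℝ :=
  Real.sqrt (∑ i, ∑ j, (A i j) ^ 2)

/-- Euclidean inner product. -/
noncomputable def rdot {ι : Type*} [Fintype ι] (a b : ι → ℝ) : ℝ := ∑ i, a i * b i

/-- The regularized quadratic penalty objective
`f_β(x) = cᵀx − ūᵀ(Ax−b) + (β/2)‖Ax−b‖² + (1/(2β))‖x−x̄‖²`. -/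
noncomputable def fpen {ι κ : Type*} [Fintype ι] [Fintype κ]
    (A : Matrix ι κ ℝ) (b : ι → ℝ) (c : κ → ℝ) (ub : ι → ℝ) (xb : κ → ℝ)
    (β : ℝ) (x : κ → ℝ) : ℝ :=
  rdot c x - rdot ub (A.mulVec x - b) + (β / 2) * l2norm (A.mulVec x - b) ^ 2
    + (1 / (2 * β)) * l2norm (x - xb) ^ 2

/-- Feasibility of the standard-form primal LP `Ax = b, x ≥ 0`. -/
def PrimalFeasible {ι κ : Type*} [Fintype ι] [Fintype κ]
    (A : Matrix ι κ ℝ) (b : ι → ℝ) : Prop :=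
  ∃ x : κ → ℝ, (∀ j, 0 ≤ x j) ∧ A.mulVec x = b

/-- Feasibility of the dual LP `Aᵀu ≤ c`. -/
def DualFeasible {ι κ : Type*} [Fintype ι] [Fintype κ]
    (A : Matrix ι κ ℝ) (c : κ → ℝ) : Prop :=
  ∃ u : ι → ℝ, ∀ j, Aᵀ.mulVec u j ≤ c j

/-- Norm of the data `d = (A, b, c)`: `max(‖A‖_F, ‖b‖₂, ‖c‖₂)`. -/
noncomputable def dnorm {ι κ : Type*} [Fintype ι] [Fintype κ]
    (A : Matrix ι κ ℝ) (b : ι → ℝ) (c : κ → ℝ) : ℝ :=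
  max (frobNorm A) (max (l2norm b) (l2norm c))

/-- Distance of the data to primal infeasibility. -/
noncomputable def distPri {ι κ : Type*} [Fintype ι] [Fintype κ]
    (A : Matrix ι κ ℝ) (b : ι → ℝ) (c : κ → ℝ) : ℝ :=
  sInf { r : ℝ | ∃ (dA : Matrix ι κ ℝ) (db : ι → ℝ) (dc : κ → ℝ),
    ¬ PrimalFeasible (A + dA) (b + db) ∧ r = dnorm dA db dc }

/-- Distance of the data to dual infeasibility. -/
noncomputable def distDual {ι κ : Type*} [Fintype ι] [Fintype κ]
    (A : Matrix ι κ ℝ) (b : ι → ℝ) (c : κ → ℝ) : ℝ :=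
  sInf { r : ℝ | ∃ (dA : Matrix ι κ ℝ) (db : ι → ℝ) (dc : κ → ℝ),
    ¬ DualFeasible (A + dA) (c + dc) ∧ r = dnorm dA db dc }

/-- Renegar primal condition number `δ_P`. -/
noncomputable def deltaP {ι κ : Type*} [Fintype ι] [Fintype κ]
    (A : Matrix ι κ ℝ) (b : ι → ℝ) (c : κ → ℝ) : ℝ := distPri A b c / dnorm A b c

/-- Renegar dual condition number `δ_D`. -/
noncomputable def deltaD {ι κ : Type*} [Fintype ι] [Fintype κ]
    (A : Matrix ι κ ℝ) (b : ι → ℝ) (c : κ → ℝ) : ℝ := distDual A b c / dnorm A b c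

/-!
The minimizer `x(β)` of the penalty `f_β` on the orthant satisfies the KKT conditions of the
perturbed LP with data `(A, A x(β), c_β)` and multiplier `ū - β (A x(β) - b)`. For optimal pairs
`(x, u)` and `(x', u')` of two LPs with the same `A`, weak duality across the problems gives
`cᵀx - c'ᵀx' ≤ ‖u‖ ‖b - b'‖ + ‖c - c'‖ ‖x'‖`. Comparing `f_β(x(β))` with `f_β(x*)` shows
`β ‖A x(β) - b‖ ≤ 5/2 C_*` and `‖x(β) - x̄‖ ≤ 3/2 C_*`, so the lower bound on `β` makes the
perturbation at most a quarter of the distances `ρ_P = δ_P ‖d‖`, `ρ_D = δ_D ‖d‖` to infeasibility.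

Every optimal pair of an LP satisfies `ρ_P ρ_D ‖x‖ ≤ ‖d‖²` and `ρ_P ρ_D ‖u‖ ≤ ‖d‖²`: a rank-one
perturbation of `A` turns `u` (resp. `x`) into a Farkas certificate of primal (resp. dual)
infeasibility, which bounds `ρ_P ‖u‖` by `max ‖c‖ (-bᵀu)` and `ρ_D ‖x‖` by `max ‖b‖ (cᵀx)`, and the
sign of the common value `cᵀx = bᵀu` decides which of the two bounds is the trivial one. Since
`ρ_P`, `ρ_D` are 1-Lipschitz in `b`, `c`, the perturbed problem obeys the same bound up to `25/9`,
and altogether `β ρ_P ρ_D |cᵀx* - c_βᵀx(β)| ≤ 25/9 ‖d‖² (5/2 + 3/2) C_*`.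
-/

section Euclidean

variable {ι κ : Type*} [Fintype ι] [Fintype κ]

lemma rdot_eq_dotProduct (x y : ι → ℝ) : rdot x y = x ⬝ᵥ y := rfl

lemma l2norm_eq_norm (x : ι → ℝ) : l2norm x = ‖(WithLp.toLp 2 x : EuclideanSpace ℝ ι)‖ := by
  simp [l2norm, EuclideanSpace.norm_eq]

lemma l2norm_nonneg (x : ι → ℝ) : 0 ≤ l2norm x := Real.sqrt_nonneg _

lemma l2norm_zero : l2norm (0 : ι → ℝ) = 0 := by simp [l2norm]

lemma l2norm_sq (x : ι → ℝ) : l2norm x ^ 2 = rdot x x := by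
  rw [l2norm, Real.sq_sqrt (by positivity)]
  simp [rdot, sq]

lemma l2norm_add_le (x y : ι → ℝ) : l2norm (x + y) ≤ l2norm x + l2norm y := by
  simpa only [l2norm_eq_norm, WithLp.toLp_add] using norm_add_le _ _

lemma l2norm_smul (t : ℝ) (x : ι → ℝ) : l2norm (t • x) = |t| * l2norm x := by
  simp only [l2norm_eq_norm, WithLp.toLp_smul, norm_smul, Real.norm_eq_abs]

lemma l2norm_neg (x : ι → ℝ) : l2norm (-x) = l2norm x := by
  simp [l2norm]

lemma l2norm_sub_comm (x y : ι → ℝ) : l2norm (x - y) = l2norm (y - x) := by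
  rw [← neg_sub, l2norm_neg]

lemma l2norm_single [DecidableEq ι] (i : ι) (t : ℝ) : l2norm (Pi.single i t) = |t| := by
  rw [l2norm, Finset.sum_eq_single i (fun j _ hj => by simp [hj]) (by simp),
    Pi.single_eq_same, Real.sqrt_sq_eq_abs]

lemma rdot_le_l2norm_mul (x y : ι → ℝ) : rdot x y ≤ l2norm x * l2norm y :=
  Real.sum_mul_le_sqrt_mul_sqrt _ x y

lemma neg_l2norm_mul_le_rdot (x y : ι → ℝ) : -(l2norm x * l2norm y) ≤ rdot x y := by
  have h := rdot_le_l2norm_mul (-x) y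
  rw [l2norm_neg, show rdot (-x) y = -rdot x y from neg_dotProduct x y] at h
  linarith

lemma frobNorm_vecMulVec (w : ι → ℝ) (v : κ → ℝ) :
    frobNorm (vecMulVec w v) = l2norm w * l2norm v := by
  rw [frobNorm, l2norm, l2norm, ← Real.sqrt_mul (by positivity), Finset.sum_mul]
  simp only [vecMulVec_apply, mul_pow, Finset.mul_sum]

lemma frobNorm_neg (A : Matrix ι κ ℝ) : frobNorm (-A) = frobNorm A := by
  simp [frobNorm]

end Euclidean

section Duality

variable {ι κ : Type*} [Fintype ι] [Fintype κ]

lemma rdot_transpose_mulVec (A : Matrix ι κ ℝ) (u : ι → ℝ) (x : κ → ℝ) :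
    rdot (Aᵀ *ᵥ u) x = rdot u (A *ᵥ x) := by
  change (Aᵀ *ᵥ u) ⬝ᵥ x = u ⬝ᵥ (A *ᵥ x)
  rw [mulVec_transpose, dotProduct_mulVec]

lemma weak_duality {A : Matrix ι κ ℝ} {c x : κ → ℝ} {u : ι → ℝ} (hx : ∀ j, 0 ≤ x j)
    (hu : ∀ j, (Aᵀ *ᵥ u) j ≤ c j) : rdot u (A *ᵥ x) ≤ rdot c x := by
  rw [← rdot_transpose_mulVec]
  exact Finset.sum_le_sum fun j _ => mul_le_mul_of_nonneg_right (hu j) (hx j)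

lemma not_primalFeasible_of_certificate {A : Matrix ι κ ℝ} {b : ι → ℝ} (y : ι → ℝ)
    (hy : ∀ j, (Aᵀ *ᵥ y) j ≤ 0) (hby : 0 < rdot b y) : ¬ PrimalFeasible A b := by
  rintro ⟨x, hx, rfl⟩
  have h := weak_duality (c := 0) hx hy
  rw [show rdot 0 x = 0 from zero_dotProduct x] at h
  exact h.not_gt (hby.trans_eq (dotProduct_comm _ _))

lemma not_dualFeasible_of_certificate {A : Matrix ι κ ℝ} {c : κ → ℝ} (x : κ → ℝ)
    (hx : ∀ j, 0 ≤ x j) (hAx : A *ᵥ x = 0) (hcx : rdot c x < 0) : ¬ DualFeasible A c := by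
  rintro ⟨u, hu⟩
  have h := weak_duality hx hu
  rw [hAx, show rdot u 0 = 0 from dotProduct_zero u] at h
  exact h.not_gt hcx

end Duality

section Distance

variable {ι κ : Type*} [Fintype ι] [Fintype κ]

lemma frobNorm_le_dnorm (A : Matrix ι κ ℝ) (b : ι → ℝ) (c : κ → ℝ) : frobNorm A ≤ dnorm A b c :=
  le_max_left _ _

lemma l2norm_b_le_dnorm (A : Matrix ι κ ℝ) (b : ι → ℝ) (c : κ → ℝ) : l2norm b ≤ dnorm A b c :=
  (le_max_left _ _).trans (le_max_right _ _)

lemma l2norm_c_le_dnorm (A : Matrix ι κ ℝ) (b : ι → ℝ) (c : κ → ℝ) : l2norm c ≤ dnorm A b c :=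
  (le_max_right _ _).trans (le_max_right _ _)

lemma dnorm_nonneg (A : Matrix ι κ ℝ) (b : ι → ℝ) (c : κ → ℝ) : 0 ≤ dnorm A b c :=
  (l2norm_nonneg c).trans (l2norm_c_le_dnorm A b c)

lemma dnorm_le_add_of_l2norm_sub_le {A : Matrix ι κ ℝ} {b b' : ι → ℝ} {c c' : κ → ℝ} {ε : ℝ}
    (hb : l2norm (b' - b) ≤ ε) (hc : l2norm (c' - c) ≤ ε) : dnorm A b' c' ≤ dnorm A b c + ε := by
  have hε : 0 ≤ ε := (l2norm_nonneg _).trans hb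
  refine max_le ?_ (max_le ?_ ?_)
  · linarith [frobNorm_le_dnorm A b c]
  · calc l2norm b' = l2norm (b + (b' - b)) := by rw [add_sub_cancel]
      _ ≤ l2norm b + ε := (l2norm_add_le _ _).trans (by gcongr)
      _ ≤ dnorm A b c + ε := by gcongr; exact l2norm_b_le_dnorm A b c
  · calc l2norm c' = l2norm (c + (c' - c)) := by rw [add_sub_cancel]
      _ ≤ l2norm c + ε := (l2norm_add_le _ _).trans (by gcongr)
      _ ≤ dnorm A b c + ε := by gcongr; exact l2norm_c_le_dnorm A b c

lemma distPri_nonneg (A : Matrix ι κ ℝ) (b : ι → ℝ) (c : κ → ℝ) : 0 ≤ distPri A b c :=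
  Real.sInf_nonneg (by rintro r ⟨_, _, _, _, rfl⟩; exact dnorm_nonneg _ _ _)

lemma distDual_nonneg (A : Matrix ι κ ℝ) (b : ι → ℝ) (c : κ → ℝ) : 0 ≤ distDual A b c :=
  Real.sInf_nonneg (by rintro r ⟨_, _, _, _, rfl⟩; exact dnorm_nonneg _ _ _)

lemma distPri_le_dnorm_of_not_primalFeasible {A dA : Matrix ι κ ℝ} {b db : ι → ℝ} (c dc : κ → ℝ)
    (h : ¬ PrimalFeasible (A + dA) (b + db)) : distPri A b c ≤ dnorm dA db dc :=
  csInf_le ⟨0, by rintro r ⟨_, _, _, _, rfl⟩; exact dnorm_nonneg _ _ _⟩ ⟨dA, db, dc, h, rfl⟩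

lemma distDual_le_dnorm_of_not_dualFeasible {A dA : Matrix ι κ ℝ} {c dc : κ → ℝ} (b db : ι → ℝ)
    (h : ¬ DualFeasible (A + dA) (c + dc)) : distDual A b c ≤ dnorm dA db dc :=
  csInf_le ⟨0, by rintro r ⟨_, _, _, _, rfl⟩; exact dnorm_nonneg _ _ _⟩ ⟨dA, db, dc, h, rfl⟩

-- With no rows (columns) every system is feasible, and the infimum over `∅` is `0`, not `∞`.
lemma distPri_of_isEmpty [IsEmpty ι] (A : Matrix ι κ ℝ) (b : ι → ℝ) (c : κ → ℝ) :
    distPri A b c = 0 := by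
  unfold distPri
  convert Real.sInf_empty using 2
  refine Set.eq_empty_of_forall_notMem ?_
  rintro r ⟨_, _, _, h, _⟩
  exact h ⟨0, fun _ => le_rfl, Subsingleton.elim _ _⟩

lemma distDual_of_isEmpty [IsEmpty κ] (A : Matrix ι κ ℝ) (b : ι → ℝ) (c : κ → ℝ) :
    distDual A b c = 0 := by
  unfold distDual
  convert Real.sInf_empty using 2
  refine Set.eq_empty_of_forall_notMem ?_
  rintro r ⟨_, _, _, h, _⟩
  exact h ⟨0, isEmptyElim⟩

lemma not_primalFeasible_zero_single [DecidableEq ι] (A : Matrix ι κ ℝ) (b : ι → ℝ) (i : ι)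
    {t : ℝ} (ht : t ≠ 0) : ¬ PrimalFeasible (A + -A) (b + (Pi.single i t - b)) := by
  rintro ⟨x, -, hx⟩
  rw [add_neg_cancel, zero_mulVec, add_sub_cancel] at hx
  exact ht (by simpa using (congrFun hx i).symm)

lemma not_dualFeasible_zero_single [DecidableEq κ] (A : Matrix ι κ ℝ) (c : κ → ℝ) (j : κ)
    {t : ℝ} (ht : 0 < t) : ¬ DualFeasible (A + -A) (c + (-Pi.single j t - c)) := by
  rintro ⟨u, hu⟩
  have h := hu j
  simp only [add_neg_cancel, transpose_zero, zero_mulVec, Pi.zero_apply, Pi.add_apply,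
    Pi.sub_apply, Pi.neg_apply, Pi.single_eq_same, add_sub_cancel, Left.nonneg_neg_iff] at h
  exact h.not_gt ht

lemma distPri_le_dnorm (A : Matrix ι κ ℝ) (b : ι → ℝ) (c : κ → ℝ) :
    distPri A b c ≤ dnorm A b c := by
  classical
  rcases isEmpty_or_nonempty ι with hι | ⟨⟨i⟩⟩
  · rw [distPri_of_isEmpty]; exact dnorm_nonneg A b c
  refine le_of_forall_pos_le_add fun ε hε => (distPri_le_dnorm_of_not_primalFeasible c 0
    (not_primalFeasible_zero_single A b i hε.ne')).trans (max_le ?_ (max_le ?_ ?_))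
  · linarith [frobNorm_neg A, frobNorm_le_dnorm A b c]
  · calc l2norm (Pi.single i ε - b) ≤ l2norm (Pi.single i ε) + l2norm (-b) :=
          sub_eq_add_neg (Pi.single i ε) b ▸ l2norm_add_le _ _
      _ ≤ dnorm A b c + ε := by
          rw [l2norm_single, abs_of_pos hε, l2norm_neg]; linarith [l2norm_b_le_dnorm A b c]
  · rw [l2norm_zero]; linarith [dnorm_nonneg A b c]

lemma distDual_le_dnorm (A : Matrix ι κ ℝ) (b : ι → ℝ) (c : κ → ℝ) :
    distDual A b c ≤ dnorm A b c := by
  classical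
  rcases isEmpty_or_nonempty κ with hκ | ⟨⟨j⟩⟩
  · rw [distDual_of_isEmpty]; exact dnorm_nonneg A b c
  refine le_of_forall_pos_le_add fun ε hε => (distDual_le_dnorm_of_not_dualFeasible b 0
    (not_dualFeasible_zero_single A c j hε)).trans (max_le ?_ (max_le ?_ ?_))
  · linarith [frobNorm_neg A, frobNorm_le_dnorm A b c]
  · rw [l2norm_zero]; linarith [dnorm_nonneg A b c]
  · calc l2norm (-Pi.single j ε - c) ≤ l2norm (-Pi.single j ε) + l2norm (-c) :=
          sub_eq_add_neg (-Pi.single j ε) c ▸ l2norm_add_le _ _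
      _ ≤ dnorm A b c + ε := by
          rw [l2norm_neg, l2norm_single, abs_of_pos hε, l2norm_neg]
          linarith [l2norm_c_le_dnorm A b c]

lemma distPri_le_distPri_add (A : Matrix ι κ ℝ) (b b' : ι → ℝ) (c c' : κ → ℝ) :
    distPri A b c ≤ distPri A b' c' + l2norm (b' - b) := by
  classical
  rcases isEmpty_or_nonempty ι with hι | ⟨⟨i⟩⟩
  · rw [distPri_of_isEmpty, distPri_of_isEmpty, zero_add]; exact l2norm_nonneg _
  rw [← sub_le_iff_le_add]
  refine le_csInf ⟨_, -A, Pi.single i 1 - b', 0, not_primalFeasible_zero_single A b' i one_ne_zero,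
    rfl⟩ ?_
  rintro r ⟨dA, db, dc, h, rfl⟩
  have h' : ¬ PrimalFeasible (A + dA) (b + (db + (b' - b))) := by
    rwa [show b + (db + (b' - b)) = b' + db by abel]
  refine sub_le_iff_le_add.2 ((distPri_le_dnorm_of_not_primalFeasible c dc h').trans
    (dnorm_le_add_of_l2norm_sub_le ?_ ?_))
  · rw [add_sub_cancel_left]
  · rw [sub_self, l2norm_zero]; exact l2norm_nonneg _

lemma distDual_le_distDual_add (A : Matrix ι κ ℝ) (b b' : ι → ℝ) (c c' : κ → ℝ) :
    distDual A b c ≤ distDual A b' c' + l2norm (c' - c) := by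
  classical
  rcases isEmpty_or_nonempty κ with hκ | ⟨⟨j⟩⟩
  · rw [distDual_of_isEmpty, distDual_of_isEmpty, zero_add]; exact l2norm_nonneg _
  rw [← sub_le_iff_le_add]
  refine le_csInf ⟨_, -A, 0, -Pi.single j 1 - c', not_dualFeasible_zero_single A c' j one_pos,
    rfl⟩ ?_
  rintro r ⟨dA, db, dc, h, rfl⟩
  have h' : ¬ DualFeasible (A + dA) (c + (dc + (c' - c))) := by
    rwa [show c + (dc + (c' - c)) = c' + dc by abel]
  refine sub_le_iff_le_add.2 ((distDual_le_dnorm_of_not_dualFeasible b db h').trans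
    (dnorm_le_add_of_l2norm_sub_le ?_ ?_))
  · rw [sub_self, l2norm_zero]; exact l2norm_nonneg _
  · rw [add_sub_cancel_left]

end Distance

section RankOne

variable {ι κ : Type*} [Fintype ι] [Fintype κ]

lemma distPri_mul_l2norm_le {A : Matrix ι κ ℝ} {c : κ → ℝ} {u : ι → ℝ} (b : ι → ℝ)
    (hu : ∀ j, (Aᵀ *ᵥ u) j ≤ c j) :
    distPri A b c * l2norm u ≤ max (l2norm c) (-rdot b u) := by
  rcases (l2norm_nonneg u).eq_or_lt with hU | hU
  · rw [← hU, mul_zero]; exact le_max_of_le_left (l2norm_nonneg c)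
  refine le_of_forall_gt_imp_ge_of_dense fun t ht => ?_
  have htc : l2norm c < t := (le_max_left _ _).trans_lt ht
  have htb : -rdot b u < t := (le_max_right _ _).trans_lt ht
  have ht0 : 0 < t := (l2norm_nonneg c).trans_lt htc
  set U := l2norm u
  have huu : rdot u u = U ^ 2 := (l2norm_sq u).symm
  have hinf : ¬ PrimalFeasible (A + vecMulVec (-(U ^ 2)⁻¹ • u) c) (b + (t / U ^ 2) • u) := by
    refine not_primalFeasible_of_certificate u (fun j => ?_) ?_
    · have h : (-(U ^ 2)⁻¹ • u) ⬝ᵥ u = -1 := by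
        rw [smul_dotProduct, show u ⬝ᵥ u = U ^ 2 from huu, smul_eq_mul]; field_simp
      simp only [transpose_add, add_mulVec, transpose_vecMulVec, vecMulVec_mulVec, h,
        Pi.add_apply, op_smul_eq_smul, Pi.smul_apply, smul_eq_mul]
      linarith [hu j]
    · change 0 < (b + (t / U ^ 2) • u) ⬝ᵥ u
      rw [add_dotProduct, smul_dotProduct, show u ⬝ᵥ u = U ^ 2 from huu, smul_eq_mul,
        div_mul_cancel₀ _ (by positivity)]
      exact neg_lt_iff_pos_add'.mp htb
  have hd : dnorm (vecMulVec (-(U ^ 2)⁻¹ • u) c) ((t / U ^ 2) • u) 0 ≤ t / U := by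
    have hUU : (U ^ 2)⁻¹ * U = U⁻¹ := by field_simp
    refine max_le ?_ (max_le ?_ ?_)
    · rw [frobNorm_vecMulVec, l2norm_smul, abs_neg, abs_of_pos (by positivity), hUU,
        inv_mul_eq_div]
      gcongr
    · rw [l2norm_smul, abs_of_pos (by positivity)]
      exact (by field_simp : t / U ^ 2 * U = t / U).le
    · rw [l2norm_zero]; positivity
  rw [← le_div_iff₀ hU]
  exact (distPri_le_dnorm_of_not_primalFeasible c 0 hinf).trans hd

lemma distDual_mul_l2norm_le {A : Matrix ι κ ℝ} {b : ι → ℝ} {x : κ → ℝ} (c : κ → ℝ)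
    (hx : ∀ j, 0 ≤ x j) (hAx : A *ᵥ x = b) :
    distDual A b c * l2norm x ≤ max (l2norm b) (rdot c x) := by
  rcases (l2norm_nonneg x).eq_or_lt with hX | hX
  · rw [← hX, mul_zero]; exact le_max_of_le_left (l2norm_nonneg b)
  refine le_of_forall_gt_imp_ge_of_dense fun t ht => ?_
  have htb : l2norm b < t := (le_max_left _ _).trans_lt ht
  have htc : rdot c x < t := (le_max_right _ _).trans_lt ht
  have ht0 : 0 < t := (l2norm_nonneg b).trans_lt htb
  set X := l2norm x
  have hxx : rdot x x = X ^ 2 := (l2norm_sq x).symm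
  have hinf : ¬ DualFeasible (A + vecMulVec (-(X ^ 2)⁻¹ • b) x) (c + -(t / X ^ 2) • x) := by
    refine not_dualFeasible_of_certificate x hx ?_ ?_
    · rw [add_mulVec, vecMulVec_mulVec, show x ⬝ᵥ x = X ^ 2 from hxx, hAx, op_smul_eq_smul,
        smul_smul, mul_neg, mul_inv_cancel₀ (by positivity), neg_one_smul, add_neg_cancel]
    · change (c + -(t / X ^ 2) • x) ⬝ᵥ x < 0
      rw [add_dotProduct, smul_dotProduct, show x ⬝ᵥ x = X ^ 2 from hxx, smul_eq_mul, neg_mul,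
        div_mul_cancel₀ _ (by positivity)]
      exact sub_neg.mpr htc
  have hd : dnorm (vecMulVec (-(X ^ 2)⁻¹ • b) x) 0 (-(t / X ^ 2) • x) ≤ t / X := by
    have hXX : (X ^ 2)⁻¹ * X = X⁻¹ := by field_simp
    refine max_le ?_ (max_le ?_ ?_)
    · rw [frobNorm_vecMulVec, l2norm_smul, abs_neg, abs_of_pos (by positivity), mul_assoc,
        mul_comm (l2norm b), ← mul_assoc, hXX, inv_mul_eq_div]
      gcongr
    · rw [l2norm_zero]; positivity
    · rw [l2norm_smul, abs_neg, abs_of_pos (by positivity)]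
      exact (by field_simp : t / X ^ 2 * X = t / X).le
  rw [← le_div_iff₀ hX]
  exact (distDual_le_dnorm_of_not_dualFeasible b 0 hinf).trans hd

end RankOne

section OptimalPair

variable {ι κ : Type*} [Fintype ι] [Fintype κ]

structure IsOptimalPair (A : Matrix ι κ ℝ) (b : ι → ℝ) (c x : κ → ℝ) (u : ι → ℝ) : Prop where
  nonneg : ∀ j, 0 ≤ x j
  mulVec_eq : A *ᵥ x = b
  dual_feasible : ∀ j, (Aᵀ *ᵥ u) j ≤ c j
  rdot_eq : rdot c x = rdot b u

namespace IsOptimalPair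

variable {A : Matrix ι κ ℝ} {b b' : ι → ℝ} {c c' x x' : κ → ℝ} {u u' : ι → ℝ}

theorem distPri_mul_distDual_mul_l2norm_le (h : IsOptimalPair A b c x u) :
    distPri A b c * distDual A b c * l2norm x ≤ dnorm A b c ^ 2 ∧
      distPri A b c * distDual A b c * l2norm u ≤ dnorm A b c ^ 2 := by
  have hPu : distPri A b c * l2norm u ≤ max (l2norm c) (-rdot c x) :=
    h.rdot_eq ▸ distPri_mul_l2norm_le b h.dual_feasible
  have hDx := distDual_mul_l2norm_le c h.nonneg h.mulVec_eq
  have hv_le : rdot c x ≤ l2norm b * l2norm u := h.rdot_eq ▸ rdot_le_l2norm_mul b u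
  have hv_ge := neg_l2norm_mul_le_rdot c x
  have hP := distPri_nonneg A b c
  have hD := distDual_nonneg A b c
  have hPd := distPri_le_dnorm A b c
  have hDd := distDual_le_dnorm A b c
  have hbd := l2norm_b_le_dnorm A b c
  have hcd := l2norm_c_le_dnorm A b c
  have hb := l2norm_nonneg b
  have hc := l2norm_nonneg c
  rcases le_total 0 (rdot c x) with hv | hv
  · rw [max_eq_left (by linarith)] at hPu
    have hPv : distPri A b c * rdot c x ≤ l2norm b * l2norm c := by nlinarith
    refine ⟨?_, by nlinarith⟩
    rw [mul_assoc]
    refine (mul_le_mul_of_nonneg_left hDx hP).trans ?_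
    rw [mul_max_of_nonneg _ _ hP]
    exact max_le (by nlinarith) (by nlinarith)
  · rw [max_eq_left (by linarith)] at hDx
    have hDv : distDual A b c * -rdot c x ≤ l2norm b * l2norm c := by nlinarith
    refine ⟨by nlinarith, ?_⟩
    rw [mul_comm (distPri A b c), mul_assoc]
    refine (mul_le_mul_of_nonneg_left hPu hD).trans ?_
    rw [mul_max_of_nonneg _ _ hD]
    exact max_le (by nlinarith) (by nlinarith)

theorem distPri_mul_distDual_mul_l2norm_le_of_perturb (h : IsOptimalPair A b' c' x u)
    (hb : 4 * l2norm (b' - b) ≤ distPri A b c) (hc : 4 * l2norm (c' - c) ≤ distDual A b c) :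
    9 * (distPri A b c * distDual A b c * l2norm x) ≤ 25 * dnorm A b c ^ 2 ∧
      9 * (distPri A b c * distDual A b c * l2norm u) ≤ 25 * dnorm A b c ^ 2 := by
  have hP : 3 * distPri A b c ≤ 4 * distPri A b' c' := by
    linarith [distPri_le_distPri_add A b b' c c']
  have hD : 3 * distDual A b c ≤ 4 * distDual A b' c' := by
    linarith [distDual_le_distDual_add A b b' c c']
  have hd : dnorm A b' c' ≤ dnorm A b c + dnorm A b c / 4 :=
    dnorm_le_add_of_l2norm_sub_le (by linarith [distPri_le_dnorm A b c])
      (by linarith [distDual_le_dnorm A b c])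
  have hP0 := distPri_nonneg A b c
  have hD0 := distDual_nonneg A b c
  have hpq : 9 * (distPri A b c * distDual A b c) ≤ 16 * (distPri A b' c' * distDual A b' c') := by
    nlinarith [mul_le_mul hP hD (by positivity) (by linarith)]
  have hd2 : 16 * dnorm A b' c' ^ 2 ≤ 25 * dnorm A b c ^ 2 := by
    nlinarith [dnorm_nonneg A b' c']
  obtain ⟨hx, hu⟩ := h.distPri_mul_distDual_mul_l2norm_le
  constructor
  · nlinarith [l2norm_nonneg x]
  · nlinarith [l2norm_nonneg u]

theorem value_sub_le (h : IsOptimalPair A b c x u) (h' : IsOptimalPair A b' c' x' u') :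
    rdot c x - rdot c' x' ≤ l2norm u * l2norm (b - b') + l2norm (c - c') * l2norm x' := by
  have hwd : rdot u b' ≤ rdot c x' := h'.mulVec_eq ▸ weak_duality h'.nonneg h.dual_feasible
  have hb : rdot u (b - b') = rdot b u - rdot u b' := by
    rw [show rdot b u = rdot u b from dotProduct_comm b u]; exact dotProduct_sub u b b'
  have hc : rdot (c - c') x' = rdot c x' - rdot c' x' := sub_dotProduct c c' x'
  linarith [h.rdot_eq, rdot_le_l2norm_mul u (b - b'), rdot_le_l2norm_mul (c - c') x']

theorem distPri_mul_distDual_mul_abs_value_sub_le (h : IsOptimalPair A b c x u)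
    (h' : IsOptimalPair A b' c' x' u') (hb : 4 * l2norm (b' - b) ≤ distPri A b c)
    (hc : 4 * l2norm (c' - c) ≤ distDual A b c) :
    distPri A b c * distDual A b c * |rdot c x - rdot c' x'| ≤
      25 / 9 * dnorm A b c ^ 2 * (l2norm (b' - b) + l2norm (c' - c)) := by
  obtain ⟨hx, hu⟩ := h.distPri_mul_distDual_mul_l2norm_le
  obtain ⟨hx', hu'⟩ := h'.distPri_mul_distDual_mul_l2norm_le_of_perturb hb hc
  have h₁ := h.value_sub_le h'
  have h₂ := h'.value_sub_le h
  rw [l2norm_sub_comm b, l2norm_sub_comm c] at h₁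
  have hp : 0 ≤ distPri A b c * distDual A b c :=
    mul_nonneg (distPri_nonneg A b c) (distDual_nonneg A b c)
  have heb := l2norm_nonneg (b' - b)
  have hec := l2norm_nonneg (c' - c)
  rw [← abs_of_nonneg hp, ← abs_mul, abs_le]
  constructor <;> nlinarith [sq_nonneg (dnorm A b c)]

end IsOptimalPair

end OptimalPair

lemma nonneg_of_forall_mul_add_sq_mul_nonneg {a q : ℝ}
    (h : ∀ t : ℝ, 0 < t → t ≤ 1 → 0 ≤ t * a + t ^ 2 * q) : 0 ≤ a := by
  by_contra! ha
  set t := min 1 (-a / (|q| + 1))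
  have ht : 0 < t := lt_min one_pos (div_pos (neg_pos.2 ha) (by positivity))
  have h₁ := h t ht (min_le_left _ _)
  have h₂ : t * (|q| + 1) ≤ -a := (le_div_iff₀ (by positivity)).1 (min_le_right _ _)
  nlinarith [mul_le_mul_of_nonneg_left (le_abs_self q) (sq_nonneg t)]

section Penalty

variable {ι κ : Type*} [Fintype ι] [Fintype κ]

lemma fpen_add_smul (A : Matrix ι κ ℝ) (b ub : ι → ℝ) (c xb : κ → ℝ) (β : ℝ) (x v : κ → ℝ)
    (t : ℝ) :
    fpen A b c ub xb β (x + t • v) = fpen A b c ub xb β x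
      + t * rdot (c + (1 / β) • (x - xb) - Aᵀ *ᵥ (ub - β • (A *ᵥ x - b))) v
      + t ^ 2 * (β / 2 * l2norm (A *ᵥ v) ^ 2 + 1 / (2 * β) * l2norm v ^ 2) := by
  simp only [fpen, l2norm_sq, rdot_eq_dotProduct, mulVec_add, mulVec_smul, mulVec_sub,
    sub_dotProduct, dotProduct_sub, add_dotProduct, dotProduct_add, smul_dotProduct,
    dotProduct_smul, smul_eq_mul, mulVec_transpose, ← dotProduct_mulVec]
  simp only [dotProduct_comm v, dotProduct_comm (A *ᵥ v), dotProduct_comm xb x]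
  ring

lemma nonneg_and_rdot_eq_zero_of_forall_rdot_sub_nonneg {g x : κ → ℝ} (hx : ∀ j, 0 ≤ x j)
    (h : ∀ y : κ → ℝ, (∀ j, 0 ≤ y j) → 0 ≤ rdot g (y - x)) : (∀ j, 0 ≤ g j) ∧ rdot g x = 0 := by
  classical
  refine ⟨fun j => ?_, ?_⟩
  · have hy : ∀ k, 0 ≤ (x + Pi.single j 1 : κ → ℝ) k := fun k =>
      add_nonneg (hx k) (by rcases eq_or_ne k j with rfl | hk <;> simp [*])
    simpa [rdot_eq_dotProduct] using h _ hy
  · have h₀ := h 0 fun _ => le_rfl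
    have h₂ := h (x + x) fun k => add_nonneg (hx k) (hx k)
    simp only [zero_sub, add_sub_cancel_right, rdot_eq_dotProduct, dotProduct_neg] at h₀ h₂ ⊢
    linarith

variable {A : Matrix ι κ ℝ} {b ub : ι → ℝ} {c xb xβ : κ → ℝ} {β : ℝ}

lemma rdot_sub_nonneg_of_forall_fpen_le (hxβ : ∀ j, 0 ≤ xβ j)
    (hmin : ∀ x : κ → ℝ, (∀ j, 0 ≤ x j) → fpen A b c ub xb β xβ ≤ fpen A b c ub xb β x)
    {y : κ → ℝ} (hy : ∀ j, 0 ≤ y j) :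
    0 ≤ rdot (c + (1 / β) • (xβ - xb) - Aᵀ *ᵥ (ub - β • (A *ᵥ xβ - b))) (y - xβ) := by
  refine nonneg_of_forall_mul_add_sq_mul_nonneg
    (q := β / 2 * l2norm (A *ᵥ (y - xβ)) ^ 2 + 1 / (2 * β) * l2norm (y - xβ) ^ 2) fun t ht ht₁ => ?_
  have hseg : ∀ j, 0 ≤ (xβ + t • (y - xβ)) j := fun j => by
    simp only [Pi.add_apply, Pi.smul_apply, Pi.sub_apply, smul_eq_mul]
    nlinarith [hxβ j, hy j]
  linarith [hmin _ hseg, fpen_add_smul A b ub c xb β xβ (y - xβ) t]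

theorem isOptimalPair_of_forall_fpen_le (hxβ : ∀ j, 0 ≤ xβ j)
    (hmin : ∀ x : κ → ℝ, (∀ j, 0 ≤ x j) → fpen A b c ub xb β xβ ≤ fpen A b c ub xb β x) :
    IsOptimalPair A (A *ᵥ xβ) (c + (1 / β) • (xβ - xb)) xβ (ub - β • (A *ᵥ xβ - b)) := by
  obtain ⟨hg, hgx⟩ := nonneg_and_rdot_eq_zero_of_forall_rdot_sub_nonneg hxβ
    fun y hy => rdot_sub_nonneg_of_forall_fpen_le hxβ hmin hy
  refine ⟨hxβ, rfl, fun j => sub_nonneg.1 (hg j), ?_⟩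
  set cβ := c + (1 / β) • (xβ - xb)
  set uβ := ub - β • (A *ᵥ xβ - b)
  have hsplit : rdot (cβ - Aᵀ *ᵥ uβ) xβ = rdot cβ xβ - rdot (Aᵀ *ᵥ uβ) xβ :=
    sub_dotProduct _ _ _
  have hcomm : rdot uβ (A *ᵥ xβ) = rdot (A *ᵥ xβ) uβ := dotProduct_comm _ _
  linarith [rdot_transpose_mulVec A uβ xβ]

theorem penalty_residual_sq_le (hβ : 0 < β) {xs : κ → ℝ} {us : ι → ℝ} {C : ℝ}
    (hopt : IsOptimalPair A b c xs us) (hxs : l2norm (xs - xb) ≤ C) (hus : l2norm (us - ub) ≤ C)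
    (hxβ : ∀ j, 0 ≤ xβ j) (hmin : fpen A b c ub xb β xβ ≤ fpen A b c ub xb β xs) :
    (β * l2norm (A *ᵥ xβ - b) - C) ^ 2 + l2norm (xβ - xb) ^ 2 ≤ 2 * C ^ 2 := by
  set r := A *ᵥ xβ - b
  set s := xβ - xb
  have hwd : rdot us (b + r) ≤ rdot c xβ := by
    rw [add_sub_cancel]; exact weak_duality hxβ hopt.dual_feasible
  have hsplit : rdot us (b + r) = rdot c xs + rdot us r := by
    rw [hopt.rdot_eq, show rdot b us = rdot us b from dotProduct_comm b us]
    exact dotProduct_add us b r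
  have hfs : fpen A b c ub xb β xs = rdot c xs + 1 / (2 * β) * l2norm (xs - xb) ^ 2 := by
    simp [fpen, hopt.mulVec_eq, l2norm_zero, rdot_eq_dotProduct]
  have hfβ : fpen A b c ub xb β xβ
      = rdot c xβ - rdot ub r + β / 2 * l2norm r ^ 2 + 1 / (2 * β) * l2norm s ^ 2 := rfl
  have hur : rdot (us - ub) r = rdot us r - rdot ub r := sub_dotProduct us ub r
  have hcs : -(C * l2norm r) ≤ rdot (us - ub) r :=
    (neg_le_neg (mul_le_mul_of_nonneg_right hus (l2norm_nonneg r))).trans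
      (neg_l2norm_mul_le_rdot _ _)
  have hxs2 : 1 / (2 * β) * l2norm (xs - xb) ^ 2 ≤ 1 / (2 * β) * C ^ 2 := by
    gcongr; exact l2norm_nonneg _
  have hhalf : β / 2 * l2norm r ^ 2 + 1 / (2 * β) * l2norm s ^ 2
      ≤ C * l2norm r + 1 / (2 * β) * C ^ 2 := by linarith
  have h := mul_le_mul_of_nonneg_left hhalf (by positivity : (0 : ℝ) ≤ 2 * β)
  have e : 2 * β * (β / 2 * l2norm r ^ 2 + 1 / (2 * β) * l2norm s ^ 2)
      = (β * l2norm r) ^ 2 + l2norm s ^ 2 := by field_simp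
  have e' : 2 * β * (C * l2norm r + 1 / (2 * β) * C ^ 2) = 2 * C * (β * l2norm r) + C ^ 2 := by
    field_simp
  nlinarith

theorem penalty_residual_le (hβ : 0 < β) {xs : κ → ℝ} {us : ι → ℝ} {C : ℝ}
    (hopt : IsOptimalPair A b c xs us) (hxs : l2norm (xs - xb) ≤ C) (hus : l2norm (us - ub) ≤ C)
    (hxβ : ∀ j, 0 ≤ xβ j) (hmin : fpen A b c ub xb β xβ ≤ fpen A b c ub xb β xs) :
    β * l2norm (A *ᵥ xβ - b) ≤ 5 / 2 * C ∧ l2norm (xβ - xb) ≤ 3 / 2 * C := by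
  have h := penalty_residual_sq_le hβ hopt hxs hus hxβ hmin
  have hC : 0 ≤ C := (l2norm_nonneg _).trans hxs
  have hR := mul_nonneg hβ.le (l2norm_nonneg (A *ᵥ xβ - b))
  have hS := l2norm_nonneg (xβ - xb)
  constructor <;> nlinarith

end Penalty

section Condition

variable {ι κ : Type*} [Fintype ι] [Fintype κ] {A : Matrix ι κ ℝ} {b : ι → ℝ} {c : κ → ℝ}

lemma distPri_pos_and_dnorm_pos (h : 0 < deltaP A b c) : 0 < distPri A b c ∧ 0 < dnorm A b c :=
  (div_pos_iff.1 h).resolve_right fun h' => (dnorm_nonneg A b c).not_gt h'.2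

lemma distDual_pos_of_deltaD_pos (h : 0 < deltaD A b c) : 0 < distDual A b c :=
  ((div_pos_iff.1 h).resolve_right fun h' => (dnorm_nonneg A b c).not_gt h'.2).1

lemma dnorm_mul_min_deltaP_deltaD (hd : 0 < dnorm A b c) :
    dnorm A b c * min (deltaP A b c) (deltaD A b c) = min (distPri A b c) (distDual A b c) := by
  rw [deltaP, deltaD, min_div_div_right hd.le, mul_div_cancel₀ _ hd.ne']

end Condition

theorem perturbed_lp_value_bound_general
    {m n : ℕ} (A : Matrix (Fin m) (Fin n) ℝ) (b : Fin m → ℝ) (c : Fin n → ℝ)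
    (ub : Fin m → ℝ) (xb : Fin n → ℝ) (β : ℝ) (hβ : 0 < β)
    (hP : 0 < deltaP A b c) (hD : 0 < deltaD A b c)
    -- (x*, u*) : a primal–dual optimal pair
    (xs : Fin n → ℝ) (us : Fin m → ℝ)
    (hpfeas : A.mulVec xs = b) (hppos : ∀ j, 0 ≤ xs j)
    (hdfeas : ∀ j, 0 ≤ (c - Aᵀ.mulVec us) j)
    (hstrong : rdot c xs = rdot b us)
    (Cs : ℝ) (hCs : Cs = max (l2norm (xs - xb)) (l2norm (us - ub)))
    -- x(β) : the minimizer of f_β over the nonnegative orthant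
    (xβ : Fin n → ℝ) (hβnn : ∀ j, 0 ≤ xβ j)
    (hβmin : ∀ x : Fin n → ℝ, (∀ j, 0 ≤ x j) →
      fpen A b c ub xb β xβ ≤ fpen A b c ub xb β x)
    -- bound on β
    (hβbig : 10 * Cs / (dnorm A b c * min (deltaP A b c) (deltaD A b c)) ≤ β)
    -- the perturbed data (the perturbed LP `min c_βᵀ x, Ax = b_β, x ≥ 0`
    -- attains its optimal value at x(β))
    (cβ : Fin n → ℝ) (hcβ : cβ = c + (1 / β) • (xβ - xb)) :
    |rdot c xs - rdot cβ xβ| ≤ (1 / β) * (25 * Cs / (2 * deltaP A b c * deltaD A b c)) := by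
  obtain ⟨hρP, hd⟩ := distPri_pos_and_dnorm_pos hP
  have hρD := distDual_pos_of_deltaD_pos hD
  rw [dnorm_mul_min_deltaP_deltaD hd, div_le_iff₀ (lt_min hρP hρD), mul_min_of_nonneg _ _ hβ.le,
    le_min_iff] at hβbig
  have hopt : IsOptimalPair A b c xs us :=
    ⟨hppos, hpfeas, fun j => sub_nonneg.1 (hdfeas j), hstrong⟩
  obtain ⟨hr, hs⟩ := penalty_residual_le hβ hopt (hCs ▸ le_max_left _ _)
    (hCs ▸ le_max_right _ _) hβnn (hβmin xs hppos)
  have hcβc : l2norm (cβ - c) = l2norm (xβ - xb) / β := by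
    rw [hcβ, add_sub_cancel_left, l2norm_smul, abs_of_pos (by positivity), one_div_mul_eq_div]
  have key := hopt.distPri_mul_distDual_mul_abs_value_sub_le
    (hcβ ▸ isOptimalPair_of_forall_fpen_le hβnn hβmin) (by nlinarith)
    (by rw [hcβc, mul_div_assoc', div_le_iff₀ hβ]; nlinarith)
  have hsum : β * (l2norm (A *ᵥ xβ - b) + l2norm (cβ - c)) ≤ 4 * Cs := by
    rw [hcβc, mul_add, mul_div_cancel₀ _ hβ.ne']; linarith
  have hRHS : (1 / β) * (25 * Cs / (2 * deltaP A b c * deltaD A b c))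
      = 25 / 2 * Cs * dnorm A b c ^ 2 / (β * (distPri A b c * distDual A b c)) := by
    rw [deltaP, deltaD]; field_simp
  rw [hRHS, le_div_iff₀ (by positivity)]
  nlinarith [mul_le_mul_of_nonneg_left key hβ.le,
    mul_le_mul_of_nonneg_left hsum (sq_nonneg (dnorm A b c)),
    mul_nonneg ((l2norm_nonneg _).trans hs) (sq_nonneg (dnorm A b c))]

/-- Theorem mp: bound on the difference between the optimal value of
the original LP and the optimal value of the perturbed LP attained at `x(β)`. -/
theorem perturbed_lp_value_bound
    {m n : ℕ} (A : Matrix (Fin m) (Fin n) ℝ) (b : Fin m → ℝ) (c : Fin n → ℝ)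
    (hrank : A.rank = m)
    (ub : Fin m → ℝ) (xb : Fin n → ℝ) (β : ℝ) (hβ : 0 < β)
    (hP : 0 < deltaP A b c) (hD : 0 < deltaD A b c)
    -- (x*, u*) : a primal–dual optimal pair
    (xs : Fin n → ℝ) (us : Fin m → ℝ)
    (hpfeas : A.mulVec xs = b) (hppos : ∀ j, 0 ≤ xs j)
    (hdfeas : ∀ j, 0 ≤ (c - Aᵀ.mulVec us) j)
    (hstrong : rdot c xs = rdot b us)
    (Cs : ℝ) (hCs : Cs = max (l2norm (xs - xb)) (l2norm (us - ub)))
    -- x(β) : the minimizer of f_β over the nonnegative orthant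
    (xβ : Fin n → ℝ) (hβnn : ∀ j, 0 ≤ xβ j)
    (hβmin : ∀ x : Fin n → ℝ, (∀ j, 0 ≤ x j) →
      fpen A b c ub xb β xβ ≤ fpen A b c ub xb β x)
    -- bound on β
    (hβbig : 10 * Cs / (dnorm A b c * min (deltaP A b c) (deltaD A b c)) ≤ β)
    -- the perturbed data (the perturbed LP `min c_βᵀ x, Ax = b_β, x ≥ 0`
    -- attains its optimal value at x(β))
    (bβ : Fin m → ℝ) (hbβ : bβ = A.mulVec xβ)
    (cβ : Fin n → ℝ) (hcβ : cβ = c + (1 / β) • (xβ - xb)) :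
    |rdot c xs - rdot cβ xβ| ≤ (1 / β) * (25 * Cs / (2 * deltaP A b c * deltaD A b c)) :=
  perturbed_lp_value_bound_general A b c ub xb β hβ hP hD xs us hpfeas hppos hdfeas hstrong Cs hCs
    xβ hβnn hβmin hβbig cβ hcβ
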